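/- Let q > 0, q ≠ 1, let n ∈ ℕ, let a,b be nonzero complex numbers, and let x ∈ ℂ. Then, as the real parameters c and d tend jointly to +∞ (along the product filter), a^n p_n(x;a,b,c,d|q)/((ac;q)_n (ad;q)_n) converges to (−b)^n q^{n(n−1)/2} Q_n(x;a^{−1},b^{−1}|q^{−1}), where Q_n(x;a,b|q) denotes the Al-Salam–Chihara polynomial. -/

import Mathlib

set_option autoImplicit false
set_option maxHeartbeats 1000000

open Finset Filter

/-- q-shifted factorial `(t;q)_n`. -/
noncomputable def qPoch (q t : ℂ) (n : ℕ) : ℂ := ∏ j ∈ Finset.range n, (1 - t * q ^ j)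

/-- For `x = cos θ`, a root `e^{iθ}` of `z² - 2xz + 1 = 0`. -/
noncomputable def awz (x : ℂ) : ℂ := x + (x ^ 2 - 1) ^ ((1 : ℂ) / 2)

/-- The Askey–Wilson polynomial `p_n(x;a,b,c,d|q)`. -/
noncomputable def askeyWilson (q a b c d : ℂ) (n : ℕ) (x : ℂ) : ℂ :=
  (a ^ n)⁻¹ * qPoch q (a * b) n * qPoch q (a * c) n * qPoch q (a * d) n *
    ∑ k ∈ Finset.range (n + 1),
      (qPoch q ((q ^ n)⁻¹) k * qPoch q (a * b * c * d * q ^ n * q⁻¹) k *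
          qPoch q (a * awz x) k * qPoch q (a * (awz x)⁻¹) k * q ^ k) /
        (qPoch q (a * b) k * qPoch q (a * c) k * qPoch q (a * d) k * qPoch q q k)

/-- The Al-Salam–Chihara polynomial `Q_n(x;a,b|q)`. -/
noncomputable def alSalamChihara (q a b : ℂ) (n : ℕ) (x : ℂ) : ℂ :=
  (a ^ n)⁻¹ * qPoch q (a * b) n *
    ∑ k ∈ Finset.range (n + 1),
      (qPoch q ((q ^ n)⁻¹) k * qPoch q (a * awz x) k * qPoch q (a * (awz x)⁻¹) k * q ^ k) /
        (qPoch q (a * b) k * qPoch q q k)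

lemma qPoch_succ (q t : ℂ) (k : ℕ) : qPoch q t (k+1) = qPoch q t k * (1 - t * q ^ k) :=
  Finset.prod_range_succ _ _

lemma qPoch_inv (q t : ℂ) (hq : q ≠ 0) (ht : t ≠ 0) (k : ℕ) :
    qPoch q⁻¹ t⁻¹ k = (-t⁻¹) ^ k * (q ^ (k * (k-1) / 2))⁻¹ * qPoch q t k := by
  induction k with
  | zero => simp [qPoch]
  | succ k ih =>
    have hs : (k+1) * ((k+1)-1) / 2 = k * (k-1) / 2 + k := by
      rw [← Finset.sum_range_id, ← Finset.sum_range_id, Finset.sum_range_succ]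
    rw [qPoch_succ, qPoch_succ, ih, hs, pow_add]
    have h2 : (q:ℂ)^(k*(k-1)/2) ≠ 0 := pow_ne_zero _ hq
    have h3 : (q:ℂ)^k ≠ 0 := pow_ne_zero _ hq
    simp only [inv_pow]
    field_simp
    ring

lemma awz_ne_zero (x : ℂ) : awz x ≠ 0 := by
  unfold awz
  intro h
  rcases eq_or_ne (x^2 - 1) 0 with h0 | h0
  · rw [h0, Complex.zero_cpow (by norm_num)] at h
    have hx : x = 0 := by simpa using h
    rw [hx] at h0; norm_num at h0
  · have hsq : ((x^2-1) ^ ((1:ℂ)/2)) * ((x^2-1) ^ ((1:ℂ)/2)) = x^2 - 1 := by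
      rw [← Complex.cpow_add _ _ h0]; norm_num
    have h1 : (x^2-1) ^ ((1:ℂ)/2) = -x := by linear_combination h
    rw [h1] at hsq
    have : (0:ℂ) = -1 := by linear_combination hsq
    norm_num at this

theorem stmt7 (q : ℝ) (hq0 : 0 < q) (hq1 : q ≠ 1) (n : ℕ)
    (a b : ℂ) (ha : a ≠ 0) (hb : b ≠ 0) (x : ℂ) :
    Filter.Tendsto
      (fun p : ℝ × ℝ => a ^ n * askeyWilson (q : ℂ) a b (p.1 : ℂ) (p.2 : ℂ) n x /
        (qPoch (q : ℂ) (a * (p.1 : ℂ)) n * qPoch (q : ℂ) (a * (p.2 : ℂ)) n))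
      (Filter.atTop ×ˢ Filter.atTop)
      (nhds ((-b) ^ n * (q : ℂ) ^ (n * (n - 1) / 2) *
        alSalamChihara ((q : ℂ))⁻¹ a⁻¹ b⁻¹ n x)) := by
  have hqC : (q:ℂ) ≠ 0 := Complex.ofReal_ne_zero.mpr hq0.ne'
  have he : awz x ≠ 0 := awz_ne_zero x
  have han : a ^ n ≠ 0 := pow_ne_zero _ ha
  have hPq : ∀ k, qPoch (q:ℂ) (q:ℂ) k ≠ 0 := by
    intro k
    apply Finset.prod_ne_zero_iff.mpr
    intro j _ h
    have h1 : (q:ℝ)^(j+1) = 1 := by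
      have : (q:ℂ)^(j+1) = 1 := by rw [pow_succ]; linear_combination -h
      exact_mod_cast this
    rcases lt_or_gt_of_ne hq1 with hlt | hgt
    · exact absurd h1 (ne_of_lt (pow_lt_one₀ hq0.le hlt (Nat.succ_ne_zero j)))
    · exact absurd h1 (ne_of_gt (one_lt_pow₀ hgt (Nat.succ_ne_zero j)))
  set C : ℕ → ℂ := fun k =>
    qPoch (q:ℂ) (a*b) n * (qPoch (q:ℂ) (((q:ℂ)^n)⁻¹) k * qPoch (q:ℂ) (a*awz x) k *
      qPoch (q:ℂ) (a*(awz x)⁻¹) k * (q:ℂ)^k) / (qPoch (q:ℂ) (a*b) k * qPoch (q:ℂ) (q:ℂ) k)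
    with hCdef
  set L : ℂ := ∑ k ∈ range (n+1), C k *
      ((-(b * (q:ℂ)^n * (q:ℂ)⁻¹ * a⁻¹)) ^ k * ((q:ℂ)^(k*(k-1)/2))⁻¹) with hLdef
  -- Step A: the ratio tends to the product limit
  have hg : ∀ k : ℕ, Tendsto (fun p : ℝ×ℝ =>
      qPoch (q:ℂ) (a*b*(p.1:ℂ)*(p.2:ℂ)*(q:ℂ)^n*(q:ℂ)⁻¹) k /
        (qPoch (q:ℂ) (a*(p.1:ℂ)) k * qPoch (q:ℂ) (a*(p.2:ℂ)) k)) (atTop ×ˢ atTop)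
      (nhds ((-(b * (q:ℂ)^n * (q:ℂ)⁻¹ * a⁻¹)) ^ k * ((q:ℂ)^(k*(k-1)/2))⁻¹)) := by
    intro k
    have hinv1 : Tendsto (fun p : ℝ × ℝ => ((p.1:ℂ))⁻¹) (atTop ×ˢ atTop) (nhds 0) := by
      have h1 : Tendsto (fun c : ℝ => ((c:ℂ))⁻¹) atTop (nhds 0) := by
        have h0 : Tendsto (fun c : ℝ => c⁻¹) atTop (nhds (0:ℝ)) := tendsto_inv_atTop_zero
        have := (Complex.continuous_ofReal.tendsto 0).comp h0
        simpa [Function.comp_def, Complex.ofReal_inv] using this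
      exact h1.comp tendsto_fst
    have hinv2 : Tendsto (fun p : ℝ × ℝ => ((p.2:ℂ))⁻¹) (atTop ×ˢ atTop) (nhds 0) := by
      have h1 : Tendsto (fun c : ℝ => ((c:ℂ))⁻¹) atTop (nhds 0) := by
        have h0 : Tendsto (fun c : ℝ => c⁻¹) atTop (nhds (0:ℝ)) := tendsto_inv_atTop_zero
        have := (Complex.continuous_ofReal.tendsto 0).comp h0
        simpa [Function.comp_def, Complex.ofReal_inv] using this
      exact h1.comp tendsto_snd
    have hsplit : ∀ p : ℝ×ℝ,
        qPoch (q:ℂ) (a*b*(p.1:ℂ)*(p.2:ℂ)*(q:ℂ)^n*(q:ℂ)⁻¹) k /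
          (qPoch (q:ℂ) (a*(p.1:ℂ)) k * qPoch (q:ℂ) (a*(p.2:ℂ)) k) =
        ∏ j ∈ range k,
          ((1 - (a*b*(p.1:ℂ)*(p.2:ℂ)*(q:ℂ)^n*(q:ℂ)⁻¹) * (q:ℂ)^j) /
           ((1 - (a*(p.1:ℂ))*(q:ℂ)^j) * (1 - (a*(p.2:ℂ))*(q:ℂ)^j))) := by
      intro p
      rw [qPoch, qPoch, qPoch, ← Finset.prod_mul_distrib, ← Finset.prod_div_distrib]
    have hval : (-(b * (q:ℂ)^n * (q:ℂ)⁻¹ * a⁻¹)) ^ k * ((q:ℂ)^(k*(k-1)/2))⁻¹ =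
        ∏ j ∈ range k, (-(b * (q:ℂ)^n * (q:ℂ)⁻¹ * a⁻¹) * ((q:ℂ)^j)⁻¹) := by
      rw [Finset.prod_mul_distrib, Finset.prod_const, Finset.card_range,
        Finset.prod_inv_distrib, Finset.prod_pow_eq_pow_sum, Finset.sum_range_id]
    simp only [hsplit]
    rw [hval]
    apply tendsto_finset_prod
    intro j _
    have hden0 : ((0:ℂ) - a*(q:ℂ)^j) * ((0:ℂ) - a*(q:ℂ)^j) ≠ 0 := by
      apply mul_ne_zero <;> · simpa using mul_ne_zero ha (pow_ne_zero j hqC)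
    have htil : Tendsto (fun p : ℝ×ℝ =>
        (((p.1:ℂ))⁻¹ * ((p.2:ℂ))⁻¹ - (a*b*(q:ℂ)^n*(q:ℂ)⁻¹) * (q:ℂ)^j) /
        ((((p.1:ℂ))⁻¹ - a*(q:ℂ)^j) * (((p.2:ℂ))⁻¹ - a*(q:ℂ)^j))) (atTop ×ˢ atTop)
        (nhds (((0:ℂ)*0 - (a*b*(q:ℂ)^n*(q:ℂ)⁻¹) * (q:ℂ)^j) /
          (((0:ℂ) - a*(q:ℂ)^j) * ((0:ℂ) - a*(q:ℂ)^j)))) := by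
      exact Tendsto.div ((hinv1.mul hinv2).sub tendsto_const_nhds)
        ((hinv1.sub tendsto_const_nhds).mul (hinv2.sub tendsto_const_nhds)) hden0
    have hvv : ((0:ℂ)*0 - (a*b*(q:ℂ)^n*(q:ℂ)⁻¹) * (q:ℂ)^j) /
          (((0:ℂ) - a*(q:ℂ)^j) * ((0:ℂ) - a*(q:ℂ)^j)) =
        -(b * (q:ℂ)^n * (q:ℂ)⁻¹ * a⁻¹) * ((q:ℂ)^j)⁻¹ := by
      have hqj : (q:ℂ)^j ≠ 0 := pow_ne_zero j hqC
      field_simp [ha, hqC]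
      ring
    rw [hvv] at htil
    apply Tendsto.congr' _ htil
    filter_upwards [(eventually_gt_atTop (0:ℝ)).prod_mk (eventually_gt_atTop (0:ℝ))] with p hp
    obtain ⟨h1, h2⟩ := hp
    have hc : ((p.1:ℂ)) ≠ 0 := Complex.ofReal_ne_zero.mpr h1.ne'
    have hd : ((p.2:ℂ)) ≠ 0 := Complex.ofReal_ne_zero.mpr h2.ne'
    have e1 : ((p.1:ℂ))⁻¹ * ((p.2:ℂ))⁻¹ - (a*b*(q:ℂ)^n*(q:ℂ)⁻¹) * (q:ℂ)^j =
        ((p.1:ℂ))⁻¹ * ((p.2:ℂ))⁻¹ * (1 - (a*b*(p.1:ℂ)*(p.2:ℂ)*(q:ℂ)^n*(q:ℂ)⁻¹) * (q:ℂ)^j) := by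
      field_simp
    have e2 : (((p.1:ℂ))⁻¹ - a*(q:ℂ)^j) * (((p.2:ℂ))⁻¹ - a*(q:ℂ)^j) =
        ((p.1:ℂ))⁻¹ * ((p.2:ℂ))⁻¹ *
          ((1 - (a*(p.1:ℂ))*(q:ℂ)^j) * (1 - (a*(p.2:ℂ))*(q:ℂ)^j)) := by
      field_simp
    rw [e1, e2, mul_div_mul_left _ _ (mul_ne_zero (inv_ne_zero hc) (inv_ne_zero hd))]
  -- Step B: eventual equality with the simplified sum
  have heq : ∀ᶠ p : ℝ×ℝ in atTop ×ˢ atTop,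
      a ^ n * askeyWilson (q : ℂ) a b (p.1 : ℂ) (p.2 : ℂ) n x /
        (qPoch (q : ℂ) (a * (p.1 : ℂ)) n * qPoch (q : ℂ) (a * (p.2 : ℂ)) n) =
      ∑ k ∈ range (n+1), C k *
        (qPoch (q:ℂ) (a*b*(p.1:ℂ)*(p.2:ℂ)*(q:ℂ)^n*(q:ℂ)⁻¹) k /
          (qPoch (q:ℂ) (a*(p.1:ℂ)) k * qPoch (q:ℂ) (a*(p.2:ℂ)) k)) := by
    have hj : ∀ j : ℕ, ∀ᶠ c : ℝ in atTop, (1:ℂ) - a*(c:ℂ)*(q:ℂ)^j ≠ 0 := by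
      intro j
      have hqj : (0:ℝ) < q^j := pow_pos hq0 j
      have hapos : (0:ℝ) < ‖a‖ := norm_pos_iff.mpr ha
      filter_upwards [eventually_gt_atTop ((‖a‖ * q^j)⁻¹)] with c hc h
      have hcpos : 0 < c := lt_trans (by positivity) hc
      have h1 : a*(c:ℂ)*(q:ℂ)^j = 1 := by linear_combination -h
      have h2 : ‖a*(c:ℂ)*(q:ℂ)^j‖ = 1 := by rw [h1]; simp
      have h3 : ‖a*(c:ℂ)*(q:ℂ)^j‖ = ‖a‖ * c * q^j := by
        rw [norm_mul, norm_mul, norm_pow]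
        simp [Complex.norm_real, abs_of_pos hcpos, abs_of_pos hq0]
      have h4 : (‖a‖ * q^j) * (‖a‖ * q^j)⁻¹ = 1 := mul_inv_cancel₀ (by positivity)
      nlinarith [mul_pos hapos hqj]
    have hev1 : ∀ᶠ c : ℝ in atTop, ∀ j ∈ Finset.range n, (1:ℂ) - a*(c:ℂ)*(q:ℂ)^j ≠ 0 :=
      (eventually_all_finset _).mpr (fun j _ => hj j)
    filter_upwards [hev1.prod_mk hev1] with p hp
    obtain ⟨h1, h2⟩ := hp
    have hPc : qPoch (q:ℂ) (a*(p.1:ℂ)) n ≠ 0 := Finset.prod_ne_zero_iff.mpr h1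
    have hPd : qPoch (q:ℂ) (a*(p.2:ℂ)) n ≠ 0 := Finset.prod_ne_zero_iff.mpr h2
    unfold askeyWilson
    rw [show a ^ n * ((a ^ n)⁻¹ * qPoch (q:ℂ) (a*b) n * qPoch (q:ℂ) (a*(p.1:ℂ)) n *
        qPoch (q:ℂ) (a*(p.2:ℂ)) n * ∑ k ∈ range (n+1),
        (qPoch (q:ℂ) (((q:ℂ)^n)⁻¹) k * qPoch (q:ℂ) (a*b*(p.1:ℂ)*(p.2:ℂ)*(q:ℂ)^n*(q:ℂ)⁻¹) k *
            qPoch (q:ℂ) (a*awz x) k * qPoch (q:ℂ) (a*(awz x)⁻¹) k * (q:ℂ)^k) /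
          (qPoch (q:ℂ) (a*b) k * qPoch (q:ℂ) (a*(p.1:ℂ)) k * qPoch (q:ℂ) (a*(p.2:ℂ)) k *
            qPoch (q:ℂ) (q:ℂ) k)) /
        (qPoch (q:ℂ) (a*(p.1:ℂ)) n * qPoch (q:ℂ) (a*(p.2:ℂ)) n) =
        qPoch (q:ℂ) (a*b) n * ∑ k ∈ range (n+1),
        (qPoch (q:ℂ) (((q:ℂ)^n)⁻¹) k * qPoch (q:ℂ) (a*b*(p.1:ℂ)*(p.2:ℂ)*(q:ℂ)^n*(q:ℂ)⁻¹) k *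
            qPoch (q:ℂ) (a*awz x) k * qPoch (q:ℂ) (a*(awz x)⁻¹) k * (q:ℂ)^k) /
          (qPoch (q:ℂ) (a*b) k * qPoch (q:ℂ) (a*(p.1:ℂ)) k * qPoch (q:ℂ) (a*(p.2:ℂ)) k *
            qPoch (q:ℂ) (q:ℂ) k)
      from by field_simp]
    rw [Finset.mul_sum]
    refine Finset.sum_congr rfl (fun k hk => ?_)
    rw [hCdef]
    rw [div_mul_div_comm, ← mul_div_assoc]
    congr 1 <;> ring
  -- Step C: the limit
  have hlim : Tendsto (fun p : ℝ × ℝ => a ^ n * askeyWilson (q : ℂ) a b (p.1 : ℂ) (p.2 : ℂ) n x /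
        (qPoch (q : ℂ) (a * (p.1 : ℂ)) n * qPoch (q : ℂ) (a * (p.2 : ℂ)) n))
      (atTop ×ˢ atTop) (nhds L) := by
    apply Tendsto.congr' (EventuallyEq.symm heq)
    rw [hLdef]
    exact tendsto_finset_sum _ (fun k _ => (hg k).const_mul (C k))
  -- Step D: identify the limit value
  have hfinal : (-b) ^ n * (q : ℂ) ^ (n * (n - 1) / 2) *
      alSalamChihara ((q : ℂ))⁻¹ a⁻¹ b⁻¹ n x = L := by
    have hab : a*b ≠ 0 := mul_ne_zero ha hb
    have hae : a*awz x ≠ 0 := mul_ne_zero ha he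
    have hae' : a*(awz x)⁻¹ ≠ 0 := mul_ne_zero ha (inv_ne_zero he)
    have hqn : ((q:ℂ)^n)⁻¹ ≠ 0 := inv_ne_zero (pow_ne_zero _ hqC)
    rw [hLdef]
    unfold alSalamChihara
    have e1 : a⁻¹*b⁻¹ = (a*b)⁻¹ := (mul_inv _ _).symm
    have e2 : (((q:ℂ)⁻¹)^n)⁻¹ = (q:ℂ)^n := by rw [inv_pow, inv_inv]
    have e5 : ∀ k, qPoch ((q:ℂ)⁻¹) ((q:ℂ)^n) k =
        (-(q:ℂ)^n)^k * ((q:ℂ)^(k*(k-1)/2))⁻¹ * qPoch (q:ℂ) (((q:ℂ)^n)⁻¹) k := by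
      intro k
      have h := qPoch_inv (q:ℂ) (((q:ℂ)^n)⁻¹) hqC hqn k
      rwa [inv_inv] at h
    have e3 : a⁻¹*awz x = (a*(awz x)⁻¹)⁻¹ := by rw [mul_inv, inv_inv]
    have e4 : a⁻¹*(awz x)⁻¹ = (a*awz x)⁻¹ := (mul_inv _ _).symm
    simp only [e1, e2, e3, e4, e5, qPoch_inv (q:ℂ) (a*b) hqC hab,
      qPoch_inv (q:ℂ) (a*(awz x)⁻¹) hqC hae',
      qPoch_inv (q:ℂ) (a*awz x) hqC hae, qPoch_inv (q:ℂ) (q:ℂ) hqC hqC]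
    rw [← mul_assoc, Finset.mul_sum]
    refine Finset.sum_congr rfl (fun k hk => ?_)
    rcases eq_or_ne (qPoch (q:ℂ) (a*b) k) 0 with hz | hz
    · simp [hCdef, hz]
    · rw [hCdef]
      have hDq := hPq k
      have hK : (q:ℂ)^(k*(k-1)/2) ≠ 0 := pow_ne_zero _ hqC
      have hN : (q:ℂ)^(n*(n-1)/2) ≠ 0 := pow_ne_zero _ hqC
      have hqk : (q:ℂ)^k ≠ 0 := pow_ne_zero _ hqC
      have hqnn : (q:ℂ)^n ≠ 0 := pow_ne_zero _ hqC
      simp only [neg_inv, ← inv_pow, inv_inv]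
      have h1 : (-(a*b))^k ≠ 0 := pow_ne_zero _ (neg_ne_zero.mpr hab)
      have h1n : (-(a*b))^n ≠ 0 := pow_ne_zero _ (neg_ne_zero.mpr hab)
      have h2 : (-(a*awz x))^k ≠ 0 := pow_ne_zero _ (neg_ne_zero.mpr hae)
      have h3 : (-(a*(awz x)⁻¹))^k ≠ 0 := pow_ne_zero _ (neg_ne_zero.mpr hae')
      have h4 : (-(q:ℂ))^k ≠ 0 := pow_ne_zero _ (neg_ne_zero.mpr hqC)
      have h5 : a^n ≠ 0 := pow_ne_zero _ ha
      have h6 : b^n ≠ 0 := pow_ne_zero _ hb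
      have hz2 : qPoch (q:ℂ) (b*a) k ≠ 0 := by rwa [mul_comm b a]
      have hinv : (awz x)⁻¹ ≠ 0 := inv_ne_zero he
      field_simp
      ring_nf
      simp only [inv_inv, inv_pow, ← mul_pow]
      field_simp
      ring_nf
      rw [pow_mul' (-1:ℂ) n 2, neg_one_sq, one_pow, mul_one]
  rw [hfinal]
  exact hlim
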